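/- Let $m\ge 2$ and $P_1,\dots,P_m \in [0,1]$ as in the two-focal-set Dempster-Shafer combination above. Then the combined (normalized) probability of the anomaly class satisfies $P(\Lambda) = \frac{\prod_{i=1}^m (1-P_i)}{\prod_{i=1}^m (1-P_i) + \sum_{i=1}^m P_i \prod_{j\neq i}(1-P_j)}$, provided the denominator is positive. -/
import Mathlib


/-- Focal set of classifier `i` under choice `b`: the singleton `{i}` if `b = true`,
its complement in `U = Fin m ⊕ Unit` (with `Sum.inr ()` playing the role of `Λ`) otherwise. -/
def dsFocal (m : ℕ) (i : Fin m) (b : Bool) : Set (Fin m ⊕ Unit) :=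
  if b then {Sum.inl i} else {Sum.inl i}ᶜ

open Classical in
/-- The unnormalized Dempster–Shafer mass on the anomaly class `{Λ}` equals `∏ (1 - Pᵢ)`,
hence the normalized anomaly probability has the stated closed form. -/
theorem stmt1 (m : ℕ) (hm : 2 ≤ m) (P : Fin m → ℝ) (hP : ∀ i, P i ∈ Set.Icc (0:ℝ) 1)
    (hK : 0 < (∏ i, (1 - P i)) + ∑ i, P i * ∏ j ∈ Finset.univ.erase i, (1 - P j)) :
    (∑ u ∈ Finset.univ.filter
        (fun u : Fin m → Bool => (⋂ i, dsFocal m i (u i)) = {Sum.inr ()}),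
      ∏ i, (if u i then P i else 1 - P i)) = ∏ i, (1 - P i)
    ∧
    (∑ u ∈ Finset.univ.filter
        (fun u : Fin m → Bool => (⋂ i, dsFocal m i (u i)) = {Sum.inr ()}),
      ∏ i, (if u i then P i else 1 - P i))
      / ((∏ i, (1 - P i)) + ∑ i, P i * ∏ j ∈ Finset.univ.erase i, (1 - P j))
    = (∏ i, (1 - P i))
      / ((∏ i, (1 - P i)) + ∑ i, P i * ∏ j ∈ Finset.univ.erase i, (1 - P j)) := by
  have hset : Finset.univ.filter
      (fun u : Fin m → Bool => (⋂ i, dsFocal m i (u i)) = {Sum.inr ()})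
      = {fun _ => false} := by
    ext u
    simp only [Finset.mem_filter, Finset.mem_univ, true_and, Finset.mem_singleton]
    constructor
    · intro h
      funext i
      by_contra hb
      have hbt : u i = true := by
        cases hu : u i
        · exact absurd hu hb
        · rfl
      have hmem : (Sum.inr () : Fin m ⊕ Unit) ∈ ⋂ j, dsFocal m j (u j) := by
        rw [h]; rfl
      have := Set.mem_iInter.mp hmem i
      rw [dsFocal, hbt] at this
      simp at this
    · rintro rfl
      ext x
      simp only [Set.mem_iInter, dsFocal, Bool.false_eq_true, if_false,
        Set.mem_compl_iff, Set.mem_singleton_iff]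
      cases x with
      | inl i =>
        constructor
        · intro h; exact absurd rfl (h i)
        · intro h; simp at h
      | inr u => simp
  rw [hset]
  have h1 : (∑ u ∈ ({fun _ => false} : Finset (Fin m → Bool)),
      ∏ i, (if u i then P i else 1 - P i)) = ∏ i, (1 - P i) := by
    simp
  exact ⟨h1, by rw [h1]⟩
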